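/- Let t₀ ≥ 0 and let A : [t₀,∞) → (0,∞) be continuous with ∫_{t₀}^∞ A(t) dt = ∞. Let Θ : [t₀,∞) → ℝ be twice differentiable with Θ''(t) = A(t)Θ(t) for all t ≥ t₀, and suppose that for some t₁ ≥ t₀ one has Θ(t₁) > 0 and Θ'(t₁) ≥ 0. Then Θ(t) → ∞ as t → ∞. -/

import Mathlib

/-!
On `[t₁, ∞)` the product `Θ Θ'` has derivative `Θ'² + A Θ² ≥ 0`, so `Θ Θ' ≥ Θ(t₁) Θ'(t₁) ≥ 0`
and `Θ²` is nondecreasing; since `Θ` then cannot reach zero, `Θ ≥ Θ(t₁) > 0`. Hence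
`Θ'' = A Θ ≥ Θ(t₁) A`, and integrating gives `Θ'(t) ≥ Θ'(t₁) + Θ(t₁) ∫_{t₁}^t A → ∞`,
which forces `Θ → ∞`.
-/

open MeasureTheory Filter Set

/-- `Θ`, with derivative `Θ'`, solves the second order linear ODE `Θ'' = A Θ` on the
half-line `[t₀, ∞)` (derivatives at the endpoint `t₀` are one-sided). -/
def IsSolOn (t₀ : ℝ) (A Θ Θ' : ℝ → ℝ) : Prop :=
  ∀ t ∈ Set.Ici t₀,
    HasDerivWithinAt Θ (Θ' t) (Set.Ici t₀) t ∧
    HasDerivWithinAt Θ' (A t * Θ t) (Set.Ici t₀) t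

theorem monotoneOn_Ici_of_hasDerivWithinAt_nonneg {f f' : ℝ → ℝ} {a : ℝ}
    (hf : ∀ t ∈ Ici a, HasDerivWithinAt f (f' t) (Ici a) t) (hf' : ∀ t > a, 0 ≤ f' t) :
    MonotoneOn f (Ici a) := by
  refine monotoneOn_of_hasDerivWithinAt_nonneg (f' := f') (convex_Ici a)
    (fun t ht => (hf t ht).continuousWithinAt) ?_ ?_ <;> rw [interior_Ici]
  · exact fun t ht => (hf t (Ioi_subset_Ici_self ht)).mono Ioi_subset_Ici_self
  · exact hf'

theorem tendsto_atTop_of_hasDerivWithinAt_of_tendsto_atTop {f f' : ℝ → ℝ} {a : ℝ}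
    (hf : ∀ t ∈ Ici a, HasDerivWithinAt f (f' t) (Ici a) t) (hf' : Tendsto f' atTop atTop) :
    Tendsto f atTop atTop := by
  obtain ⟨b, hb⟩ := eventually_atTop.1 ((hf'.eventually_ge_atTop 1).and (eventually_ge_atTop a))
  have hsub : Ici b ⊆ Ici a := Ici_subset_Ici.2 (hb b le_rfl).2
  have hmono : MonotoneOn (fun t => f t - t) (Ici b) :=
    monotoneOn_Ici_of_hasDerivWithinAt_nonneg
      (fun t ht => ((hf t (hsub ht)).mono hsub).sub (hasDerivWithinAt_id t _))
      fun t ht => sub_nonneg.2 (hb t ht.le).1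
  refine tendsto_atTop_mono' _ ?_ (tendsto_atTop_add_const_right _ (f b - b) tendsto_id)
  filter_upwards [eventually_ge_atTop b] with t ht
  linarith [hmono self_mem_Ici ht ht, id_eq t]

theorem tendsto_intervalIntegral_atTop_of_lintegral_Ici_eq_top {f : ℝ → ℝ} {a b : ℝ}
    (hf : ContinuousOn f (Ici a)) (hf₀ : ∀ t ≥ a, 0 ≤ f t)
    (htop : ∫⁻ t in Ici a, ENNReal.ofReal (f t) = ⊤) (hab : a ≤ b) :
    Tendsto (fun t => ∫ s in b..t, f s) atTop atTop := by
  have hIcc : ∀ t, ContinuousOn f (Icc a t) := fun t => hf.mono Icc_subset_Ici_self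
  have hint : ∀ t ≥ a, IntervalIntegrable f volume a t := fun t ht =>
    (hIcc t).intervalIntegrable_of_Icc ht
  have hcover : AECover (volume.restrict (Ici a)) atTop (Ico a) := aecover_Ici_of_Ico tendsto_id
  have hlim := hcover.lintegral_tendsto_of_countably_generated
    (hf.aestronglyMeasurable measurableSet_Ici).aemeasurable.ennreal_ofReal
  rw [htop] at hlim
  have hbase : Tendsto (fun t => ∫ s in a..t, f s) atTop atTop := by
    rw [← ENNReal.tendsto_ofReal_nhds_top]
    refine hlim.congr' ?_
    filter_upwards [eventually_ge_atTop a] with t ht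
    rw [Measure.restrict_restrict measurableSet_Ico, inter_eq_left.2 Ico_subset_Ici_self,
      intervalIntegral.integral_of_le ht, ← integral_Ico_eq_integral_Ioc,
      ofReal_integral_eq_lintegral_ofReal ((hIcc t).integrableOn_Icc.mono_set Ico_subset_Icc_self)
      ((ae_restrict_iff' measurableSet_Ico).2 (ae_of_all _ fun s hs => hf₀ s hs.1))]
  refine (tendsto_atTop_add_const_right _ (-∫ s in a..b, f s) hbase).congr' ?_
  filter_upwards [eventually_ge_atTop a] with t ht
  rw [← sub_eq_add_neg, intervalIntegral.integral_interval_sub_left (hint t ht) (hint b hab)]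

namespace IsSolOn

variable {t₀ a : ℝ} {A Θ Θ' : ℝ → ℝ}

theorem mono (hsol : IsSolOn t₀ A Θ Θ') (h : t₀ ≤ a) : IsSolOn a A Θ Θ' := fun t ht =>
  have hsub := Ici_subset_Ici.2 h
  ⟨(hsol t (hsub ht)).1.mono hsub, (hsol t (hsub ht)).2.mono hsub⟩

theorem continuousOn (hsol : IsSolOn a A Θ Θ') : ContinuousOn Θ (Ici a) :=
  fun t ht => (hsol t ht).1.continuousWithinAt

theorem continuousOn_deriv (hsol : IsSolOn a A Θ Θ') : ContinuousOn Θ' (Ici a) :=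
  fun t ht => (hsol t ht).2.continuousWithinAt

theorem deriv_sub_deriv_eq_integral (hsol : IsSolOn a A Θ Θ') (hA : ContinuousOn A (Ici a))
    {t : ℝ} (ht : a ≤ t) : Θ' t - Θ' a = ∫ s in a..t, A s * Θ s :=
  (intervalIntegral.integral_eq_sub_of_hasDeriv_right_of_le ht
    (hsol.continuousOn_deriv.mono Icc_subset_Ici_self)
    (fun s hs => (hsol s (mem_Ici.2 hs.1.le)).2.mono (Ioi_subset_Ici hs.1.le))
    ((hA.mul hsol.continuousOn).mono Icc_subset_Ici_self |>.intervalIntegrable_of_Icc ht)).symm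

variable (hsol : IsSolOn a A Θ Θ') (hA₀ : ∀ t ≥ a, 0 ≤ A t)
include hsol hA₀

theorem monotoneOn_mul_deriv : MonotoneOn (fun t => Θ t * Θ' t) (Ici a) :=
  monotoneOn_Ici_of_hasDerivWithinAt_nonneg (fun t ht => (hsol t ht).1.mul (hsol t ht).2)
    fun t ht => by
      nlinarith [mul_self_nonneg (Θ' t), mul_nonneg (hA₀ t ht.le) (mul_self_nonneg (Θ t))]

theorem monotoneOn_mul_self (h : 0 ≤ Θ a * Θ' a) : MonotoneOn (fun t => Θ t * Θ t) (Ici a) :=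
  monotoneOn_Ici_of_hasDerivWithinAt_nonneg (fun t ht => (hsol t ht).1.mul (hsol t ht).1)
    fun t ht => by
      nlinarith [hsol.monotoneOn_mul_deriv hA₀ self_mem_Ici (mem_Ici.2 ht.le) ht.le]

theorem le_of_pos_of_deriv_nonneg (h₁ : 0 < Θ a) (h₂ : 0 ≤ Θ' a) {t : ℝ} (ht : a ≤ t) :
    Θ a ≤ Θ t := by
  have hsq := hsol.monotoneOn_mul_self hA₀ (mul_nonneg h₁.le h₂)
  by_contra! hlt
  have hneg : Θ t < 0 := by nlinarith [hsq self_mem_Ici ht ht]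
  obtain ⟨s, hs, hs₀⟩ := intermediate_value_Icc' ht (hsol.continuousOn.mono Icc_subset_Ici_self)
    ⟨hneg.le, h₁.le⟩
  have hs_sq : Θ a * Θ a ≤ Θ s * Θ s := hsq self_mem_Ici hs.1 hs.1
  rw [hs₀] at hs_sq
  nlinarith

theorem mul_integral_le_deriv_sub_deriv (hA : ContinuousOn A (Ici a)) {c : ℝ}
    (hc : ∀ t ≥ a, c ≤ Θ t) {t : ℝ} (ht : a ≤ t) :
    c * ∫ s in a..t, A s ≤ Θ' t - Θ' a := by
  rw [hsol.deriv_sub_deriv_eq_integral hA ht, ← intervalIntegral.integral_const_mul]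
  refine intervalIntegral.integral_mono_on ht ?_ ?_ fun s hs => ?_
  · exact (continuousOn_const.mul hA).mono Icc_subset_Ici_self |>.intervalIntegrable_of_Icc ht
  · exact (hA.mul hsol.continuousOn).mono Icc_subset_Ici_self |>.intervalIntegrable_of_Icc ht
  · rw [mul_comm c]
    exact mul_le_mul_of_nonneg_left (hc s hs.1) (hA₀ s hs.1)

end IsSolOn

theorem tendsto_atTop_of_pos_value_nonneg_deriv_general (t₀ : ℝ)
    (A : ℝ → ℝ) (hAc : ContinuousOn A (Set.Ici t₀)) (hApos : ∀ t ≥ t₀, 0 < A t)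
    (hAint : (∫⁻ t in Set.Ici t₀, ENNReal.ofReal (A t)) = ⊤)
    (Θ Θ' : ℝ → ℝ) (hsol : IsSolOn t₀ A Θ Θ')
    (t₁ : ℝ) (ht₁ : t₀ ≤ t₁) (h1 : 0 < Θ t₁) (h2 : 0 ≤ Θ' t₁) :
    Filter.Tendsto Θ Filter.atTop Filter.atTop := by
  have hsol₁ := hsol.mono ht₁
  have hA₀ : ∀ t ≥ t₁, 0 ≤ A t := fun t ht => (hApos t (ht₁.trans ht)).le
  have hΘ : ∀ t ≥ t₁, Θ t₁ ≤ Θ t := fun t => hsol₁.le_of_pos_of_deriv_nonneg hA₀ h1 h2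
  have hF := tendsto_intervalIntegral_atTop_of_lintegral_Ici_eq_top hAc
    (fun t ht => (hApos t ht).le) hAint ht₁
  have hΘ' : Tendsto Θ' atTop atTop := by
    refine tendsto_atTop_mono' _ ?_
      (tendsto_atTop_add_const_right _ (Θ' t₁) (hF.const_mul_atTop h1))
    filter_upwards [eventually_ge_atTop t₁] with t ht
    linarith [hsol₁.mul_integral_le_deriv_sub_deriv hA₀ (hAc.mono (Ici_subset_Ici.2 ht₁)) hΘ ht]
  exact tendsto_atTop_of_hasDerivWithinAt_of_tendsto_atTop (fun t ht => (hsol₁ t ht).1) hΘ'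

theorem tendsto_atTop_of_pos_value_nonneg_deriv (t₀ : ℝ) (ht₀ : 0 ≤ t₀)
    (A : ℝ → ℝ) (hAc : ContinuousOn A (Set.Ici t₀)) (hApos : ∀ t ≥ t₀, 0 < A t)
    (hAint : (∫⁻ t in Set.Ici t₀, ENNReal.ofReal (A t)) = ⊤)
    (Θ Θ' : ℝ → ℝ) (hsol : IsSolOn t₀ A Θ Θ')
    (t₁ : ℝ) (ht₁ : t₀ ≤ t₁) (h1 : 0 < Θ t₁) (h2 : 0 ≤ Θ' t₁) :
    Filter.Tendsto Θ Filter.atTop Filter.atTop :=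
  tendsto_atTop_of_pos_value_nonneg_deriv_general t₀ A hAc hApos hAint Θ Θ' hsol t₁ ht₁ h1 h2
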